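/- arXiv:2605.22688 — 2 statements merged into one kernel-verified Lean document; each statement's English description precedes it below -/
import Mathlib

section
/- For all z ∈ ℂ with |z| < 1, the polynomial M_{2,4}(z) = 1 − 2z/5 + z²/40 satisfies |Log(M_{2,4}(z))| < 1, where Log is the principal logarithm; equivalently, M_{2,4} is subordinate to e^z on the unit disk. -/
/-! On the unit disk `M_{2,4}(z) - 1 = -2z/5 + z²/40` has modulus at most `2/5 + 1/40 < 1/2`, and
for `‖u‖ ≤ 1/2` the logarithm satisfies `‖log (1 + u)‖ ≤ (3/2) ‖u‖ ≤ 3/4`. -/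

theorem Complex.norm_log_one_add_lt_one {u : ℂ} (hu : ‖u‖ ≤ 1 / 2) :
    ‖Complex.log (1 + u)‖ < 1 :=
  (Complex.norm_log_one_add_half_le_self hu).trans_lt (by linarith)

theorem norm_neg_two_mul_div_five_add_sq_div_forty_le_half {z : ℂ} (hz : ‖z‖ ≤ 1) :
    ‖-(2 * z / 5) + z ^ 2 / 40‖ ≤ 1 / 2 :=
  calc ‖-(2 * z / 5) + z ^ 2 / 40‖ ≤ ‖-(2 * z / 5)‖ + ‖z ^ 2 / 40‖ := norm_add_le _ _
    _ = 2 / 5 * ‖z‖ + ‖z‖ ^ 2 / 40 := by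
        simp only [norm_neg, norm_div, norm_mul, norm_pow, Complex.norm_ofNat]
        ring
    _ ≤ 2 / 5 * 1 + 1 ^ 2 / 40 := by gcongr
    _ ≤ 1 / 2 := by norm_num

theorem M24_exp_subordinate (z : ℂ) (hz : ‖z‖ < 1) :
    ‖Complex.log (1 - 2 * z / 5 + z ^ 2 / 40)‖ < 1 := by
  have h := Complex.norm_log_one_add_lt_one
    (norm_neg_two_mul_div_five_add_sq_div_forty_le_half hz.le)
  rwa [← add_assoc, ← sub_eq_add_neg] at h
end

section
/- Let q: 𝔻 → ℂ be analytic with q(0) = 1, and suppose that for all z in the unit disk, z²q''(z) + (α+1−z)·z·q'(z) + n·z·q(z) = 0, where α ∈ ℝ with (1/e)·(α − 1 − n) > 0 (i.e., α > n + 1), and n ∈ ℕ. If q = M_{n,α} (the normalized Laguerre polynomial), then q is subordinate to e^z on 𝔻, i.e., there is an analytic w: 𝔻 → 𝔻 with w(0) = 0 and q(z) = e^{w(z)}. -/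
/-- Pochhammer (rising factorial) symbol `(x)_k = x (x+1) ⋯ (x+k-1)`. -/
noncomputable def poch (x : ℝ) (k : ℕ) : ℝ := ∏ i ∈ Finset.range k, (x + i)

/-- Normalized Laguerre polynomial
`M_{n,α}(z) = Σ_{k=0}^{n} ((-1)^k n! / ((1+α)_k (n-k)! k!)) z^k`. -/
noncomputable def M (n : ℕ) (α : ℝ) (z : ℂ) : ℂ :=
  ∑ k ∈ Finset.range (n + 1),
    (((-1 : ℝ) ^ k * n.factorial /
        (poch (1 + α) k * (n - k).factorial * k.factorial) : ℝ) : ℂ) * z ^ k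


/-!
The coefficients `σ_k` of `σ = -M'/M` satisfy, by the Laguerre equation
`z M'' + (α + 1 - z) M' + n M = 0`, the Riccati equation `z σ' + (α + 1) σ = n + z σ + z σ²`.
Its coefficient recursion shows `σ_k ≥ 0`, and summing it bounds the partial sums of `σ_k` by
`n / (α - 1) < 1`. Hence `w(z) = -Σ σ_k z^(k+1) / (k+1)` is holomorphic on the unit disc with
`|w| ≤ Σ σ_k < 1`, and `exp(-w) M` has derivative zero and value `1` at `0`, so `M = exp ∘ w`.
-/

open Finset PowerSeries Metric

theorem riccati_of_mul_eq_neg_derivative {R : Type*} [CommRing R] [IsDomain R]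
    {m S a b : R⟦X⟧} (hm : m ≠ 0) (hS : S * m = -d⁄dX R m)
    (hode : X * d⁄dX R (d⁄dX R m) + a * d⁄dX R m + b * m = 0) :
    X * d⁄dX R S + a * S = b + X * S ^ 2 := by
  have hS' := congrArg (d⁄dX R) hS
  rw [Derivation.leibniz, smul_eq_mul, smul_eq_mul, map_neg] at hS'
  have : m * (X * d⁄dX R S + a * S - (b + X * S ^ 2)) = 0 := by
    linear_combination X * hS' - hode + (a - X * S) * hS
  exact sub_eq_zero.mp ((mul_eq_zero.mp this).resolve_left hm)

theorem sum_range_sum_antidiagonal_le_sq {f : ℕ → ℝ} (hf : ∀ k, 0 ≤ f k) (N : ℕ) :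
    ∑ k ∈ range N, ∑ p ∈ antidiagonal k, f p.1 * f p.2 ≤ (∑ k ∈ range N, f k) ^ 2 := by
  simp only [Finset.Nat.sum_antidiagonal_eq_sum_range_succ (f · * f ·), Nat.succ_eq_add_one]
  rw [sum_range_diag_flip N (f · * f ·), sq, sum_mul_sum]
  gcongr with i hi
  · exact fun j _ _ => mul_nonneg (hf i) (hf j)
  · exact Nat.sub_le N i

section RiccatiRecursion

variable {σ : ℕ → ℝ} {a b : ℝ} (h0 : (1 + a) * σ 0 = b)
  (hsucc : ∀ k : ℕ, (k + 2 + a) * σ (k + 1) = σ k + ∑ p ∈ antidiagonal k, σ p.1 * σ p.2)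
include h0 hsucc

theorem nonneg_of_riccati (ha : -1 < a) (hb : 0 ≤ b) (k : ℕ) : 0 ≤ σ k := by
  induction k using Nat.strong_induction_on with
  | _ k ih =>
    rcases k with _ | k
    · rw [← h0] at hb
      exact nonneg_of_mul_nonneg_right hb (by linarith)
    · have hrhs : 0 ≤ σ k + ∑ p ∈ antidiagonal k, σ p.1 * σ p.2 :=
        add_nonneg (ih k k.lt_succ_self) (sum_nonneg fun p hp => mul_nonneg
          (ih _ (Finset.Nat.antidiagonal.fst_lt hp)) (ih _ (Finset.Nat.antidiagonal.snd_lt hp)))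
      rw [← hsucc] at hrhs
      exact nonneg_of_mul_nonneg_right hrhs (by linarith [(k.cast_nonneg : (0 : ℝ) ≤ k)])

theorem sum_range_le_of_riccati (ha : 1 < a) (hb : 0 ≤ b) (hba : b ≤ a - 1) (N : ℕ) :
    ∑ k ∈ range N, σ k ≤ b / (a - 1) := by
  have hσ := nonneg_of_riccati h0 hsucc (by linarith) hb
  set t := b / (a - 1)
  have ht0 : 0 ≤ t := div_nonneg hb (by linarith)
  have ht1 : t ≤ 1 := (div_le_one (by linarith)).mpr hba
  have hta : t * (a - 1) = b := div_mul_cancel₀ _ (by linarith)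
  induction N with
  | zero => simpa using ht0
  | succ N ih =>
    set s := ∑ k ∈ range N, σ k
    have hweighted : ∑ k ∈ range (N + 1), ((k : ℝ) + 1 + a) * σ k
        = b + s + ∑ k ∈ range N, ∑ p ∈ antidiagonal k, σ p.1 * σ p.2 := by
      have hterm : ∀ k ∈ range N, (((k + 1 : ℕ) : ℝ) + 1 + a) * σ (k + 1)
          = σ k + ∑ p ∈ antidiagonal k, σ p.1 * σ p.2 := fun k _ => by
        rw [← hsucc]; push_cast; ring
      rw [sum_range_succ', sum_congr rfl hterm, sum_add_distrib, Nat.cast_zero, zero_add, h0]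
      ring
    have hlow : (1 + a) * ∑ k ∈ range (N + 1), σ k
        ≤ ∑ k ∈ range (N + 1), ((k : ℝ) + 1 + a) * σ k := by
      rw [mul_sum]
      exact sum_le_sum fun k _ => mul_le_mul_of_nonneg_right
        (by linarith [(k.cast_nonneg : (0 : ℝ) ≤ k)]) (hσ k)
    -- `t ≤ 1` gives `b + t + t ^ 2 ≤ (1 + a) * t`, which closes the induction.
    have hsq := sum_range_sum_antidiagonal_le_sq hσ N
    have hs2 : s ^ 2 ≤ t ^ 2 := pow_le_pow_left₀ (sum_nonneg fun k _ => hσ k) ih 2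
    refine le_of_mul_le_mul_left (hlow.trans ?_) (by linarith : (0 : ℝ) < 1 + a)
    rw [hweighted]
    nlinarith

end RiccatiRecursion

theorem norm_mul_pow_le_of_norm_le_one (a : ℂ) {z : ℂ} (hz : ‖z‖ ≤ 1) (k : ℕ) :
    ‖a * z ^ k‖ ≤ ‖a‖ := by
  rw [norm_mul, norm_pow]
  exact mul_le_of_le_one_right (norm_nonneg a) (pow_le_one₀ (norm_nonneg z) hz)

theorem norm_div_succ_le (a : ℂ) (k : ℕ) : ‖a / (k + 1)‖ ≤ ‖a‖ := by
  rw [norm_div]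
  exact div_le_self (norm_nonneg a) (by norm_cast; simp)

noncomputable def primitiveSeries (c : ℕ → ℂ) (z : ℂ) : ℂ := ∑' k, c k / (k + 1) * z ^ (k + 1)

theorem primitiveSeries_zero (c : ℕ → ℂ) : primitiveSeries c 0 = 0 := by
  simp [primitiveSeries]

section primitiveSeries

variable {c : ℕ → ℂ} (hc : Summable (‖c ·‖))
include hc

theorem norm_primitiveSeries_le {z : ℂ} (hz : ‖z‖ ≤ 1) :
    ‖primitiveSeries c z‖ ≤ ∑' k, ‖c k‖ := by
  have hle k : ‖c k / (k + 1) * z ^ (k + 1)‖ ≤ ‖c k‖ :=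
    (norm_mul_pow_le_of_norm_le_one _ hz _).trans (norm_div_succ_le _ k)
  have hsum := hc.of_nonneg_of_le (fun _ => norm_nonneg _) hle
  exact (norm_tsum_le_tsum_norm hsum).trans (hsum.tsum_le_tsum hle hc)

theorem hasDerivAt_primitiveSeries {z : ℂ} (hz : z ∈ ball (0 : ℂ) 1) :
    HasDerivAt (primitiveSeries c) (∑' k, c k * z ^ k) z := by
  refine hasDerivAt_tsum_of_isPreconnected (g := fun k z => c k / (k + 1) * z ^ (k + 1))
    (g' := fun k z => c k * z ^ k) hc isOpen_ball (convex_ball 0 1).isPreconnected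
    (fun k y _ => ?_) (fun k y hy => ?_) (mem_ball_self one_pos)
    (summable_zero.congr fun k => by simp) hz
  · refine ((hasDerivAt_pow (k + 1) y).const_mul (c k / (k + 1))).congr_deriv ?_
    push_cast [Nat.add_sub_cancel]
    field_simp
  · exact norm_mul_pow_le_of_norm_le_one _ (mem_ball_zero_iff.mp hy).le _

end primitiveSeries

theorem eqOn_exp_of_hasDerivAt {s : Set ℂ} (hs : IsOpen s) (hs' : IsPreconnected s)
    {P w w' : ℂ → ℂ} (hP : ∀ z ∈ s, HasDerivAt P (w' z * P z) z)
    (hw : ∀ z ∈ s, HasDerivAt w (w' z) z) {z₀ : ℂ} (hz₀ : z₀ ∈ s)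
    (h₀ : P z₀ = Complex.exp (w z₀)) : ∀ z ∈ s, P z = Complex.exp (w z) := by
  have hderiv : ∀ z ∈ s, HasDerivAt (fun z => Complex.exp (-w z) * P z) 0 z := fun z hz => by
    simpa using ((hw z hz).fun_neg.cexp.fun_mul (hP z hz)).congr_deriv (by ring)
  intro z hz
  have hconst := hs.is_const_of_deriv_eq_zero hs'
    (fun z hz => (hderiv z hz).differentiableAt.differentiableWithinAt)
    (fun z hz => (hderiv z hz).deriv) hz hz₀
  rw [h₀, ← Complex.exp_add, neg_add_cancel, Complex.exp_zero, Complex.exp_neg,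
    inv_mul_eq_one₀ (Complex.exp_ne_zero _)] at hconst
  exact hconst.symm

theorem exists_eq_exp_of_hasDerivAt {c : ℕ → ℂ} (hc : Summable (‖c ·‖)) (hc1 : ∑' k, ‖c k‖ < 1)
    {P : ℂ → ℂ} (hP0 : P 0 = 1)
    (hP : ∀ z ∈ ball (0 : ℂ) 1, HasDerivAt P ((∑' k, c k * z ^ k) * P z) z) :
    ∃ w : ℂ → ℂ, DifferentiableOn ℂ w (ball (0 : ℂ) 1) ∧ w 0 = 0 ∧
      (∀ z ∈ ball (0 : ℂ) 1, ‖w z‖ < 1) ∧ ∀ z ∈ ball (0 : ℂ) 1, P z = Complex.exp (w z) :=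
  ⟨primitiveSeries c,
    fun z hz => (hasDerivAt_primitiveSeries hc hz).differentiableAt.differentiableWithinAt,
    primitiveSeries_zero c,
    fun z hz => (norm_primitiveSeries_le hc (mem_ball_zero_iff.mp hz).le).trans_lt hc1,
    eqOn_exp_of_hasDerivAt isOpen_ball (convex_ball 0 1).isPreconnected hP
      (fun z hz => hasDerivAt_primitiveSeries hc hz) (mem_ball_self one_pos)
      (by rw [hP0, primitiveSeries_zero, Complex.exp_zero])⟩

noncomputable def seriesFun (f : ℝ⟦X⟧) (z : ℂ) : ℂ := ∑' k, ((coeff k f : ℝ) : ℂ) * z ^ k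

theorem seriesFun_coe (p : Polynomial ℝ) (z : ℂ) : seriesFun p z = Polynomial.aeval z p := by
  rw [seriesFun, tsum_eq_sum (s := range (p.natDegree + 1)), Polynomial.aeval_eq_sum_range]
  · simp [Polynomial.coeff_coe, Complex.real_smul]
  · intro k hk
    rw [Polynomial.coeff_coe, Polynomial.coeff_eq_zero_of_natDegree_lt (by simpa using hk)]
    simp

theorem seriesFun_neg (f : ℝ⟦X⟧) (z : ℂ) : seriesFun (-f) z = -seriesFun f z := by
  simp only [seriesFun, map_neg, Complex.ofReal_neg, neg_mul, tsum_neg]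

theorem seriesFun_mul {f g : ℝ⟦X⟧} (hf : Summable fun k => |coeff k f|)
    (hg : Summable fun k => |coeff k g|) {z : ℂ} (hz : ‖z‖ ≤ 1) :
    seriesFun (f * g) z = seriesFun f z * seriesFun g z := by
  have hnorm {h : ℝ⟦X⟧} (hh : Summable fun k => |coeff k h|) :
      Summable fun k => ‖((coeff k h : ℝ) : ℂ) * z ^ k‖ :=
    hh.of_nonneg_of_le (fun _ => norm_nonneg _)
      fun k => (norm_mul_pow_le_of_norm_le_one _ hz k).trans_eq (Complex.norm_real _)
  rw [seriesFun, seriesFun, seriesFun,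
    tsum_mul_tsum_eq_tsum_sum_antidiagonal_of_summable_norm (hnorm hf) (hnorm hg)]
  refine tsum_congr fun k => ?_
  rw [coeff_mul, Complex.ofReal_sum, sum_mul]
  refine sum_congr rfl fun p hp => ?_
  rw [← mem_antidiagonal.mp hp]
  push_cast
  ring

theorem poch_pos {x : ℝ} (hx : 0 < x) (k : ℕ) : 0 < poch x k :=
  prod_pos fun i _ => by positivity

theorem poch_succ (x : ℝ) (k : ℕ) : poch x (k + 1) = poch x k * (x + k) :=
  prod_range_succ _ _

theorem cast_choose_succ_mul (n k : ℕ) :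
    (n.choose (k + 1) : ℝ) * (k + 1) = n.choose k * ((n : ℝ) - k) := by
  rcases le_or_gt k n with hk | hk
  · have h := congrArg (Nat.cast : ℕ → ℝ) (Nat.choose_succ_right_eq n k)
    push_cast [Nat.cast_sub hk] at h
    exact h
  · simp [Nat.choose_eq_zero_of_lt hk, Nat.choose_eq_zero_of_lt (hk.trans k.lt_succ_self)]

-- `n.choose k` vanishes for `k > n`, so no truncation of the coefficient sequence is needed.
noncomputable def laguerreCoeff (n : ℕ) (α : ℝ) (k : ℕ) : ℝ :=
  (-1) ^ k * n.choose k / poch (1 + α) k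

noncomputable def laguerrePoly (n : ℕ) (α : ℝ) : Polynomial ℝ :=
  ∑ k ∈ range (n + 1), Polynomial.monomial k (laguerreCoeff n α k)

theorem laguerreCoeff_succ {n : ℕ} {α : ℝ} (hα : -1 < α) (k : ℕ) :
    (k + 1) * (k + 1 + α) * laguerreCoeff n α (k + 1) = (k - n) * laguerreCoeff n α k := by
  have hp := (poch_pos (by linarith : 0 < 1 + α) k).ne'
  have hk : (1 + α + k) ≠ 0 := by linarith [(k.cast_nonneg : (0 : ℝ) ≤ k)]
  unfold laguerreCoeff
  rw [poch_succ, pow_succ]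
  field_simp
  linear_combination (-(1 + α + k)) * cast_choose_succ_mul n k

theorem coeff_laguerrePoly (n : ℕ) (α : ℝ) (k : ℕ) :
    (laguerrePoly n α).coeff k = laguerreCoeff n α k := by
  rw [laguerrePoly, Polynomial.finsetSum_coeff]
  simp only [Polynomial.coeff_monomial, sum_ite_eq', mem_range, Nat.lt_succ_iff]
  split_ifs with hk
  · rfl
  · simp [laguerreCoeff, Nat.choose_eq_zero_of_lt (not_le.mp hk)]

theorem M_eq_aeval_laguerrePoly (n : ℕ) (α : ℝ) (z : ℂ) :
    M n α z = Polynomial.aeval z (laguerrePoly n α) := by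
  rw [M, laguerrePoly, map_sum]
  refine sum_congr rfl fun k hk => ?_
  rw [Polynomial.aeval_monomial, Complex.coe_algebraMap, laguerreCoeff,
    Nat.cast_choose ℝ (Nat.lt_succ_iff.mp (mem_range.mp hk))]
  congr 2
  ring

theorem laguerrePoly_ode (n : ℕ) {α : ℝ} (hα : -1 < α) :
    X * d⁄dX ℝ (d⁄dX ℝ (laguerrePoly n α : ℝ⟦X⟧))
      + (C (α + 1) - X) * d⁄dX ℝ (laguerrePoly n α : ℝ⟦X⟧)
      + C (n : ℝ) * (laguerrePoly n α : ℝ⟦X⟧) = 0 := by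
  ext k
  have hc j : coeff j (laguerrePoly n α : ℝ⟦X⟧) = laguerreCoeff n α j := by
    rw [Polynomial.coeff_coe, coeff_laguerrePoly]
  rcases k with _ | k
  · simp only [map_add, map_sub, add_mul, sub_mul, map_one, one_mul, coeff_C_mul,
      coeff_derivative, hc, coeff_zero_X_mul, map_zero]
    linear_combination laguerreCoeff_succ (n := n) hα 0
  · simp only [map_add, map_sub, add_mul, sub_mul, map_one, one_mul, coeff_C_mul,
      coeff_derivative, hc, coeff_succ_X_mul, map_zero]
    have h := laguerreCoeff_succ (n := n) hα (k + 1)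
    push_cast at h ⊢
    linear_combination h

theorem constantCoeff_laguerrePoly (n : ℕ) (α : ℝ) :
    constantCoeff (laguerrePoly n α : ℝ⟦X⟧) = 1 := by
  rw [← coeff_zero_eq_constantCoeff_apply, Polynomial.coeff_coe, coeff_laguerrePoly]
  simp [laguerreCoeff, poch]

noncomputable def laguerreNegLogDeriv (n : ℕ) (α : ℝ) : ℝ⟦X⟧ :=
  -d⁄dX ℝ (laguerrePoly n α : ℝ⟦X⟧) * (laguerrePoly n α : ℝ⟦X⟧)⁻¹

theorem laguerreNegLogDeriv_mul (n : ℕ) (α : ℝ) :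
    laguerreNegLogDeriv n α * laguerrePoly n α = -d⁄dX ℝ (laguerrePoly n α : ℝ⟦X⟧) := by
  rw [laguerreNegLogDeriv, mul_assoc, PowerSeries.inv_mul_cancel _
    (by rw [constantCoeff_laguerrePoly]; exact one_ne_zero), mul_one]

theorem laguerreNegLogDeriv_riccati (n : ℕ) {α : ℝ} (hα : -1 < α) :
    X * d⁄dX ℝ (laguerreNegLogDeriv n α) + (C (α + 1) - X) * laguerreNegLogDeriv n α
      = C (n : ℝ) + X * laguerreNegLogDeriv n α ^ 2 :=
  riccati_of_mul_eq_neg_derivative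
    (fun h => by simpa [h] using constantCoeff_laguerrePoly n α)
    (laguerreNegLogDeriv_mul n α) (laguerrePoly_ode n hα)

theorem coeff_zero_laguerreNegLogDeriv (n : ℕ) {α : ℝ} (hα : -1 < α) :
    (1 + α) * coeff 0 (laguerreNegLogDeriv n α) = n := by
  have h := congrArg (coeff 0) (laguerreNegLogDeriv_riccati n hα)
  simp only [map_add, map_sub, add_mul, sub_mul, map_one, one_mul, coeff_C_mul, coeff_zero_X_mul,
    coeff_C, ↓reduceIte] at h
  linear_combination h

theorem coeff_succ_laguerreNegLogDeriv (n : ℕ) {α : ℝ} (hα : -1 < α) (k : ℕ) :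
    (k + 2 + α) * coeff (k + 1) (laguerreNegLogDeriv n α)
      = coeff k (laguerreNegLogDeriv n α) + ∑ p ∈ antidiagonal k,
        coeff p.1 (laguerreNegLogDeriv n α) * coeff p.2 (laguerreNegLogDeriv n α) := by
  have h := congrArg (coeff (k + 1)) (laguerreNegLogDeriv_riccati n hα)
  simp only [map_add, map_sub, add_mul, sub_mul, map_one, one_mul, coeff_C_mul, coeff_succ_X_mul,
    coeff_C, Nat.add_one_ne_zero, ↓reduceIte, coeff_derivative] at h
  rw [sq, coeff_mul] at h
  linear_combination h

theorem coeff_laguerreNegLogDeriv_nonneg (n : ℕ) {α : ℝ} (hα : -1 < α) (k : ℕ) :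
    0 ≤ coeff k (laguerreNegLogDeriv n α) :=
  nonneg_of_riccati (σ := (coeff · (laguerreNegLogDeriv n α)))
    (coeff_zero_laguerreNegLogDeriv n hα) (coeff_succ_laguerreNegLogDeriv n hα) hα n.cast_nonneg k

theorem sum_range_coeff_laguerreNegLogDeriv_le {n : ℕ} {α : ℝ} (hα : (n : ℝ) + 1 < α)
    (N : ℕ) : ∑ k ∈ range N, coeff k (laguerreNegLogDeriv n α) ≤ n / (α - 1) := by
  have hα' : -1 < α := by linarith [n.cast_nonneg' (α := ℝ)]
  exact sum_range_le_of_riccati (coeff_zero_laguerreNegLogDeriv n hα')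
    (coeff_succ_laguerreNegLogDeriv n hα') (by linarith) n.cast_nonneg (by linarith) N

theorem summable_abs_coeff_laguerreNegLogDeriv {n : ℕ} {α : ℝ} (hα : (n : ℝ) + 1 < α) :
    Summable (fun k => |coeff k (laguerreNegLogDeriv n α)|) := by
  have hσ := coeff_laguerreNegLogDeriv_nonneg n (by linarith [n.cast_nonneg' (α := ℝ)])
  simp only [abs_of_nonneg (hσ _)]
  exact summable_of_sum_range_le hσ (sum_range_coeff_laguerreNegLogDeriv_le hα)

theorem tsum_abs_coeff_laguerreNegLogDeriv_lt_one {n : ℕ} {α : ℝ} (hα : (n : ℝ) + 1 < α) :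
    ∑' k, |coeff k (laguerreNegLogDeriv n α)| < 1 := by
  have hσ := coeff_laguerreNegLogDeriv_nonneg n (by linarith [n.cast_nonneg' (α := ℝ)])
  simp only [abs_of_nonneg (hσ _)]
  exact (Real.tsum_le_of_sum_range_le hσ (sum_range_coeff_laguerreNegLogDeriv_le hα)).trans_lt
    ((div_lt_one (by linarith)).mpr (by linarith))

theorem M_zero (n : ℕ) (α : ℝ) : M n α 0 = 1 := by
  simp [M_eq_aeval_laguerrePoly, ← Polynomial.coeff_zero_eq_aeval_zero', coeff_laguerrePoly,
    laguerreCoeff, poch]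

theorem hasDerivAt_M {n : ℕ} {α : ℝ} (hS : Summable fun k => |coeff k (laguerreNegLogDeriv n α)|)
    {z : ℂ} (hz : ‖z‖ ≤ 1) :
    HasDerivAt (M n α) (-seriesFun (laguerreNegLogDeriv n α) z * M n α z) z := by
  have hpoly : Summable fun k => |coeff k (laguerrePoly n α : ℝ⟦X⟧)| :=
    summable_of_ne_finset_zero (s := range ((laguerrePoly n α).natDegree + 1)) fun k hk => by
      rw [Polynomial.coeff_coe, Polynomial.coeff_eq_zero_of_natDegree_lt (by simpa using hk),
        abs_zero]
  have hderiv : -seriesFun (laguerreNegLogDeriv n α) z * M n α z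
      = Polynomial.aeval z (Polynomial.derivative (laguerrePoly n α)) := by
    rw [M_eq_aeval_laguerrePoly, ← seriesFun_coe, neg_mul, ← seriesFun_mul hS hpoly hz,
      laguerreNegLogDeriv_mul, seriesFun_neg, neg_neg, derivative_coe, seriesFun_coe]
  rw [hderiv, funext (M_eq_aeval_laguerrePoly n α)]
  exact Polynomial.hasDerivAt_aeval _ z

theorem exists_M_eq_exp {n : ℕ} {α : ℝ} (hα : (n : ℝ) + 1 < α) :
    ∃ w : ℂ → ℂ, DifferentiableOn ℂ w (ball (0 : ℂ) 1) ∧ w 0 = 0 ∧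
      (∀ z ∈ ball (0 : ℂ) 1, ‖w z‖ < 1) ∧ ∀ z ∈ ball (0 : ℂ) 1, M n α z = Complex.exp (w z) := by
  have hS := summable_abs_coeff_laguerreNegLogDeriv hα
  refine exists_eq_exp_of_hasDerivAt (c := fun k => -((coeff k (laguerreNegLogDeriv n α) : ℝ) : ℂ))
    (by simpa using hS) (by simpa using tsum_abs_coeff_laguerreNegLogDeriv_lt_one hα) (M_zero n α)
    fun z hz => ?_
  simpa [seriesFun, tsum_neg] using hasDerivAt_M hS (mem_ball_zero_iff.mp hz).le

open Metric in
theorem laguerre_exp_subordination_general (n : ℕ) (α : ℝ)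
    (hα : (1 / Real.exp 1) * (α - 1 - n) > 0)
    (q : ℂ → ℂ)
    (hqM : q = M n α) :
    ∃ w : ℂ → ℂ, DifferentiableOn ℂ w (ball (0 : ℂ) 1) ∧ w 0 = 0 ∧
      (∀ z ∈ ball (0 : ℂ) 1, ‖w z‖ < 1) ∧
      ∀ z ∈ ball (0 : ℂ) 1, q z = Complex.exp (w z) := by
  subst hqM
  exact exists_M_eq_exp (by linarith [pos_of_mul_pos_right hα (by positivity)])

open Metric in
theorem laguerre_exp_subordination (n : ℕ) (α : ℝ)
    (hα : (1 / Real.exp 1) * (α - 1 - n) > 0)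
    (q : ℂ → ℂ) (hq : DifferentiableOn ℂ q (ball (0 : ℂ) 1))
    (hq0 : q 0 = 1)
    (hode : ∀ z ∈ ball (0 : ℂ) 1,
      z ^ 2 * iteratedDeriv 2 q z + ((α : ℂ) + 1 - z) * z * deriv q z
        + (n : ℂ) * z * q z = 0)
    (hqM : q = M n α) :
    ∃ w : ℂ → ℂ, DifferentiableOn ℂ w (ball (0 : ℂ) 1) ∧ w 0 = 0 ∧
      (∀ z ∈ ball (0 : ℂ) 1, ‖w z‖ < 1) ∧
      ∀ z ∈ ball (0 : ℂ) 1, q z = Complex.exp (w z) :=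
  laguerre_exp_subordination_general n α hα q hqM
end
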